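/- Every nonzero submodule W of Ω(λ, α, β, γ) contains a nonzero polynomial in ℂ[t] alone (i.e., not involving s), and moreover contains two coprime polynomials of ℂ[t]; consequently 1 ∈ W and W = Ω(λ, α, β, γ). -/

import Mathlib

open MvPolynomial

abbrev R2 : Type := MvPolynomial (Fin 2) ℂ

/-- Substitution `g(s,t) ↦ g(s - u, t + v)`. -/
noncomputable def sh (u v : ℂ) : R2 →ₐ[ℂ] R2 := aeval ![X 0 - C u, X 1 + C v]

/-- Action of `e_i` in `Ω(λ,α,β,γ)`. -/
noncomputable def omE (lam a : ℂ) (i : ℤ) (g : R2) : R2 :=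
  C (lam ^ i * a) * sh (i : ℂ) (-2) g

/-- Action of `f_i` in `Ω(λ,α,β,γ)`. -/
noncomputable def omF (lam a b : ℂ) (i : ℤ) (g : R2) : R2 :=
  C (-(lam ^ i / a)) * (C 2⁻¹ * X 1 - C b) * (C 2⁻¹ * X 1 + C b + 1) * sh (i : ℂ) 2 g

/-- Action of `h_i`. -/
noncomputable def opH (lam : ℂ) (i : ℤ) (g : R2) : R2 :=
  C (lam ^ i) * X 1 * sh (i : ℂ) 0 g

/-- Action of `d_i`. -/
noncomputable def opD (lam c : ℂ) (i : ℤ) (g : R2) : R2 :=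
  C (lam ^ i) * (X 0 + C ((i : ℂ) * c)) * sh (i : ℂ) 0 g
/-- The embedding `ℂ[t] → ℂ[s,t]`, sending the variable to `t = X 1`. -/
noncomputable def embT (p : Polynomial ℂ) : R2 := Polynomial.aeval (X 1 : R2) p


noncomputable section StmtAux

abbrev A1 : Type := MvPolynomial (Fin 1) ℂ

def EE : R2 ≃ₐ[ℂ] Polynomial A1 := finSuccEquiv ℂ 1

def sig : A1 →ₐ[ℂ] A1 := aeval (fun _ => X 0 + C (-2 : ℂ))

lemma sig_left (x : A1) : aeval (fun _ : Fin 1 => X 0 - C (-2 : ℂ)) (sig x) = x := by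
  have h : ((aeval fun _ : Fin 1 => X 0 - C (-2 : ℂ)).comp sig : A1 →ₐ[ℂ] A1)
      = AlgHom.id ℂ A1 := by
    apply algHom_ext
    intro i
    fin_cases i
    simp [sig]
  exact AlgHom.congr_fun h x

lemma sig_inj : Function.Injective (sig : A1 → A1) :=
  Function.LeftInverse.injective sig_left

lemma sh_X0 (u v : ℂ) : sh u v (X 0) = X 0 - C u := by simp [sh]
lemma sh_X1 (u v : ℂ) : sh u v (X 1) = X 1 + C v := by simp [sh]

lemma sh_zero_zero (g : R2) : sh 0 0 g = g := by
  have hv : ![X 0 - C (0:ℂ), X 1 + C (0:ℂ)] = (X : Fin 2 → R2) := by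
    funext i; fin_cases i <;> simp
  show aeval ![X 0 - C (0:ℂ), X 1 + C 0] g = g
  rw [hv, aeval_X_left_apply]

lemma EE_X0 : EE (X 0) = Polynomial.X := finSuccEquiv_X_zero
lemma EE_X1 : EE (X 1) = Polynomial.C (X 0) := by
  rw [show (1 : Fin 2) = Fin.succ 0 from rfl]
  exact finSuccEquiv_X_succ
lemma EE_C (u : ℂ) : EE (C u) = Polynomial.C (C u) := by
  rw [← MvPolynomial.algebraMap_eq, AlgEquiv.commutes, Polynomial.algebraMap_apply,
    MvPolynomial.algebraMap_eq]

lemma EE_sh (u : ℂ) (g : R2) :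
    EE (sh u (-2) g) =
      (Polynomial.map (sig : A1 →+* A1) (EE g)).comp
        (Polynomial.X - Polynomial.C (C u)) := by
  have h : (EE.toAlgHom.comp (sh u (-2)) : R2 →ₐ[ℂ] Polynomial A1) =
      ((((Polynomial.aeval (Polynomial.X - Polynomial.C (C u)) :
          Polynomial A1 →ₐ[A1] Polynomial A1).restrictScalars ℂ).comp
        (Polynomial.mapAlgHom sig)).comp EE.toAlgHom : R2 →ₐ[ℂ] Polynomial A1) := by
    apply algHom_ext
    intro i
    fin_cases i
    · simp [sh_X0, EE_X0, EE_C, Polynomial.mapAlgHom]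
    · simp [sh_X1, EE_X1, EE_C, Polynomial.mapAlgHom, sig, Polynomial.algebraMap_eq]
  have h2 := AlgHom.congr_fun h g
  simp only [AlgHom.comp_apply, AlgEquiv.toAlgHom_eq_coe, AlgHom.coe_coe,
    AlgHom.coe_restrictScalars', Polynomial.mapAlgHom] at h2
  rw [show EE (sh u (-2) g) = _ from h2, ← Polynomial.comp_eq_aeval]
  rfl


lemma psurj (r : A1) : ∃ p : Polynomial ℂ, Polynomial.aeval (X 0 : A1) p = r := by
  induction r using MvPolynomial.induction_on with
  | C u => exact ⟨Polynomial.C u, by simp [MvPolynomial.algebraMap_eq]⟩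
  | add p q hp hq =>
    obtain ⟨p1, h1⟩ := hp; obtain ⟨q1, h2⟩ := hq
    exact ⟨p1 + q1, by simp [h1, h2]⟩
  | mul_X p i hp =>
    obtain ⟨p1, h1⟩ := hp
    refine ⟨p1 * Polynomial.X, ?_⟩
    have : i = 0 := Subsingleton.elim i 0
    simp [h1, this]

lemma EE_embT (p : Polynomial ℂ) :
    EE (embT p) = Polynomial.C (Polynomial.aeval (X 0 : A1) p) := by
  unfold embT
  rw [← Polynomial.aeval_algHom_apply EE (X 1 : R2) p]
  rw [show EE (X 1) = Polynomial.C (X 0) from EE_X1]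
  rw [show (Polynomial.C (X 0 : A1) : Polynomial A1)
      = (Polynomial.CAlgHom : A1 →ₐ[ℂ] Polynomial A1) (X 0 : A1) from rfl]
  rw [Polynomial.aeval_algHom_apply (Polynomial.CAlgHom : A1 →ₐ[ℂ] Polynomial A1)]
  rfl

lemma sh_embT (p : Polynomial ℂ) :
    sh 0 (-2) (embT p) = embT (p.comp (Polynomial.X - Polynomial.C 2)) := by
  unfold embT
  rw [← Polynomial.aeval_algHom_apply (sh 0 (-2)) (X 1) p, Polynomial.aeval_comp]
  congr 1
  rw [show (sh 0 (-2)) (X 1) = X 1 + C (-2) from sh_X1 0 (-2)]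
  simp [sub_eq_add_neg]

lemma comp_shift_eq_self {R : Type*} [CommRing R] [IsDomain R] [CharZero R] {q : Polynomial R}
    (h : q.comp (Polynomial.X - Polynomial.C 1) = q) : q.natDegree = 0 := by
  by_contra hnd
  have hq0 : q ≠ 0 := by rintro rfl; simp at hnd
  have heval : ∀ x : R, q.eval (x - 1) = q.eval x := by
    intro x
    conv_rhs => rw [← h]
    simp [Polynomial.eval_comp]
  have hnat : ∀ n : ℕ, q.eval (-(n : R)) = q.eval 0 := by
    intro n
    induction n with
    | zero => simp
    | succ k ih =>
      have e : (-((k + 1 : ℕ) : R)) = -(k : R) - 1 := by push_cast; ring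
      rw [e, heval, ih]
  have hP0 : q - Polynomial.C (q.eval 0) ≠ 0 := by
    intro h0
    have hq : q = Polynomial.C (q.eval 0) := by rwa [sub_eq_zero] at h0
    apply hnd; rw [hq, Polynomial.natDegree_C]
  have hfin := Polynomial.finite_setOf_isRoot hP0
  have hinf : Set.Infinite {x : R | (q - Polynomial.C (q.eval 0)).IsRoot x} := by
    apply Set.infinite_of_injective_forall_mem (f := fun n : ℕ => -(n : R))
    · intro m n hmn
      exact Nat.cast_injective (neg_injective hmn)
    · intro n
      simp only [Set.mem_setOf_eq, Polynomial.IsRoot.def, Polynomial.eval_sub,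
        Polynomial.eval_C, hnat n, sub_self]
  exact hinf hfin

lemma fd_ne_and_lt {R : Type*} [CommRing R] [IsDomain R] [CharZero R]
    (q : Polynomial R) (hq : 0 < q.natDegree) :
    q.comp (Polynomial.X - Polynomial.C 1) - q ≠ 0 ∧
    (q.comp (Polynomial.X - Polynomial.C 1) - q).natDegree < q.natDegree := by
  have hq0 : q ≠ 0 := fun h => by simp [h] at hq
  have harg : (Polynomial.X - Polynomial.C (1:R)) = Polynomial.X + Polynomial.C (-1:R) := by
    rw [map_neg, Polynomial.C_1, ← sub_eq_add_neg]
  have hcompnd : (q.comp (Polynomial.X - Polynomial.C 1)).natDegree = q.natDegree := by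
    rw [harg, ← Polynomial.taylor_apply, Polynomial.natDegree_taylor]
  have hlc : (q.comp (Polynomial.X - Polynomial.C 1)).leadingCoeff = q.leadingCoeff := by
    rw [Polynomial.leadingCoeff_comp (by rw [Polynomial.natDegree_X_sub_C]; exact one_ne_zero),
      (Polynomial.monic_X_sub_C (1:R)), one_pow, mul_one]
  have hT0 : q.comp (Polynomial.X - Polynomial.C 1) ≠ 0 := by
    intro h
    apply hq0
    rw [← Polynomial.leadingCoeff_eq_zero, ← hlc, h, Polynomial.leadingCoeff_zero]
  have hdeg : (q.comp (Polynomial.X - Polynomial.C 1)).degree = q.degree := by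
    rw [Polynomial.degree_eq_natDegree hT0, Polynomial.degree_eq_natDegree hq0, hcompnd]
  have hsub := Polynomial.degree_sub_lt hdeg hT0 hlc
  have hne : q.comp (Polynomial.X - Polynomial.C 1) - q ≠ 0 := by
    intro h
    rw [sub_eq_zero] at h
    have := comp_shift_eq_self h
    omega
  refine ⟨hne, ?_⟩
  have := Polynomial.natDegree_lt_natDegree hne (hsub.trans_le hdeg.le)
  exact this

end StmtAux

/-- Every nonzero invariant subspace W of Ω(λ,α,β,γ) contains a nonzero polynomial in t
alone, indeed two coprime polynomials in t; consequently 1 ∈ W and W = ⊤. -/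
theorem stmt18 (lam a : ℂ) (hlam : lam ≠ 0) (ha : a ≠ 0) (b c : ℂ)
    (W : Submodule ℂ R2) (hW : W ≠ ⊥)
    (hE : ∀ i : ℤ, ∀ g ∈ W, omE lam a i g ∈ W)
    (hF : ∀ i : ℤ, ∀ g ∈ W, omF lam a b i g ∈ W)
    (hH : ∀ i : ℤ, ∀ g ∈ W, opH lam i g ∈ W)
    (hD : ∀ i : ℤ, ∀ g ∈ W, opD lam c i g ∈ W) :
    (∃ p : Polynomial ℂ, p ≠ 0 ∧ embT p ∈ W) ∧
    (∃ p q : Polynomial ℂ, IsCoprime p q ∧ embT p ∈ W ∧ embT q ∈ W) ∧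
    (1 : R2) ∈ W ∧ W = ⊤ := by
  classical
  have hX1mul : ∀ g ∈ W, X 1 * g ∈ W := by
    intro g hg
    have h := hH 0 g hg
    simpa [opH, sh_zero_zero] using h
  have hX0mul : ∀ g ∈ W, X 0 * g ∈ W := by
    intro g hg
    have h := hD 0 g hg
    simpa [opD, sh_zero_zero] using h
  have hmul : ∀ r : R2, ∀ g ∈ W, r * g ∈ W := by
    intro r
    induction r using MvPolynomial.induction_on with
    | C u => intro g hg; rw [← smul_eq_C_mul]; exact W.smul_mem u hg
    | add p q hp hq =>
      intro g hg; rw [add_mul]; exact W.add_mem (hp g hg) (hq g hg)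
    | mul_X p i hp =>
      intro g hg
      have h1 : p * g ∈ W := hp g hg
      rw [show p * X i * g = X i * (p * g) by ring]
      fin_cases i
      · exact hX0mul _ h1
      · exact hX1mul _ h1
  have hsh1 : ∀ i : ℤ, ∀ g ∈ W, sh (i:ℂ) (-2) g ∈ W := by
    intro i g hg
    have hne : lam ^ i * a ≠ 0 := mul_ne_zero (zpow_ne_zero i hlam) ha
    have h := hE i g hg
    have e : sh (i:ℂ) (-2) g = (lam ^ i * a)⁻¹ • omE lam a i g := by
      rw [omE, ← smul_eq_C_mul, smul_smul, inv_mul_cancel₀ hne, one_smul]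
    rw [e]; exact W.smul_mem _ h
  have hDmem : ∀ g ∈ W, sh 1 (-2) g - sh 0 (-2) g ∈ W := by
    intro g hg
    have h1 := hsh1 1 g hg
    have h0 := hsh1 0 g hg
    rw [Int.cast_one] at h1
    rw [Int.cast_zero] at h0
    exact W.sub_mem h1 h0
  -- base case of induction: no s-dependence
  have base : ∀ g ∈ W, g ≠ 0 → (EE g).natDegree = 0 →
      ∃ p : Polynomial ℂ, p ≠ 0 ∧ embT p ∈ W := by
    intro g hg hg0 hdeg
    obtain ⟨r, hr⟩ := Polynomial.natDegree_eq_zero.mp hdeg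
    obtain ⟨p, hp⟩ := psurj r
    have hpg : embT p = g := by
      apply EE.injective
      rw [EE_embT, hp, hr]
    refine ⟨p, ?_, by rw [hpg]; exact hg⟩
    rintro rfl
    apply hg0
    apply EE.injective
    rw [map_zero, ← hr, ← hp, map_zero, map_zero]
  -- induction on the s-degree
  have key : ∀ n : ℕ, ∀ g ∈ W, g ≠ 0 → (EE g).natDegree ≤ n →
      ∃ p : Polynomial ℂ, p ≠ 0 ∧ embT p ∈ W := by
    intro n
    induction n with
    | zero => intro g hg hg0 hd; exact base g hg hg0 (Nat.le_zero.mp hd)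
    | succ n ih =>
      intro g hg hg0 hd
      rcases Nat.eq_zero_or_pos (EE g).natDegree with h0 | hpos
      · exact base g hg hg0 h0
      · set M := Polynomial.map (sig : A1 →+* A1) (EE g) with hM
        have hMnd : M.natDegree = (EE g).natDegree :=
          Polynomial.natDegree_map_eq_of_injective sig_inj _
        have hMpos : 0 < M.natDegree := by omega
        obtain ⟨hne, hlt⟩ := fd_ne_and_lt M hMpos
        have hEd : EE (sh 1 (-2) g - sh 0 (-2) g)
            = M.comp (Polynomial.X - Polynomial.C 1) - M := by
          rw [map_sub, EE_sh, EE_sh, hM]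
          simp
        have hgW' : sh 1 (-2) g - sh 0 (-2) g ∈ W := hDmem g hg
        have hg0' : sh 1 (-2) g - sh 0 (-2) g ≠ 0 := by
          intro h
          apply hne
          rw [← hEd, h, map_zero]
        have hdlt : (EE (sh 1 (-2) g - sh 0 (-2) g)).natDegree ≤ n := by
          rw [hEd]; omega
        exact ih _ hgW' hg0' hdlt
  obtain ⟨g0, hg0W, hg00⟩ := Submodule.exists_mem_ne_zero_of_ne_bot hW
  obtain ⟨p, hp0, hpW⟩ := key (EE g0).natDegree g0 hg0W hg00 le_rfl
  -- iterated shifts of p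
  have hshiftW : ∀ q : Polynomial ℂ, embT q ∈ W →
      embT (q.comp (Polynomial.X - Polynomial.C 2)) ∈ W := by
    intro q hq
    have h := hsh1 0 (embT q) hq
    rw [Int.cast_zero] at h
    rwa [sh_embT] at h
  have hiter : ∀ k : ℕ, embT (p.comp (Polynomial.X - Polynomial.C (2*(k:ℂ)))) ∈ W := by
    intro k
    induction k with
    | zero => simpa [embT] using hpW
    | succ k ih =>
      have h2 := hshiftW _ ih
      rw [Polynomial.comp_assoc] at h2
      have e : (Polynomial.X - Polynomial.C (2*(k:ℂ))).comp
            (Polynomial.X - Polynomial.C 2)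
          = Polynomial.X - Polynomial.C (2*((k:ℂ)+1)) := by
        rw [Polynomial.sub_comp, Polynomial.X_comp, Polynomial.C_comp,
          show (2*((k:ℂ)+1)) = 2*(k:ℂ) + 2 by ring, map_add]
        ring
      rw [e] at h2
      rw [show ((k+1 : ℕ) : ℂ) = (k:ℂ)+1 by push_cast; ring]
      exact h2
  -- choose a good shift
  set Z : Finset ℂ := p.roots.toFinset with hZ
  set diffs : Finset ℂ := (Z ×ˢ Z).image (fun z => z.1 - z.2) with hdiffs
  have hinjf : Function.Injective (fun k : ℕ => 2*(k:ℂ)) := by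
    intro m n h
    simp only at h
    exact Nat.cast_injective (mul_left_cancel₀ two_ne_zero h)
  have hfin : {k : ℕ | 2*(k:ℂ) ∈ (diffs : Set ℂ)}.Finite :=
    Set.Finite.preimage hinjf.injOn diffs.finite_toSet
  obtain ⟨k, hk⟩ := hfin.infinite_compl.nonempty
  simp only [Set.mem_compl_iff, Set.mem_setOf_eq, Finset.mem_coe] at hk
  set q := p.comp (Polynomial.X - Polynomial.C (2*(k:ℂ))) with hq
  have hqW : embT q ∈ W := hiter k
  have hcop : IsCoprime p q := by
    rw [← EuclideanDomain.gcd_isUnit_iff]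
    by_contra hu
    set d := EuclideanDomain.gcd p q with hd
    have hdp : d ∣ p := EuclideanDomain.gcd_dvd_left p q
    have hdq : d ∣ q := EuclideanDomain.gcd_dvd_right p q
    have hd0 : d ≠ 0 := by
      intro h
      exact hp0 ((EuclideanDomain.gcd_eq_zero_iff.mp h).1)
    have hddeg : (0 : WithBot ℕ) < d.degree := by
      rcases lt_or_eq_of_le (Polynomial.zero_le_degree_iff.mpr hd0) with h | h
      · exact h
      · exact absurd (Polynomial.isUnit_iff_degree_eq_zero.mpr h.symm) hu
    obtain ⟨z, hz⟩ := Complex.exists_root hddeg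
    have hzp : p.eval z = 0 := by
      obtain ⟨e, he⟩ := hdp
      rw [he, Polynomial.eval_mul, show d.eval z = 0 from hz, zero_mul]
    have hzq : q.eval z = 0 := by
      obtain ⟨e, he⟩ := hdq
      rw [he, Polynomial.eval_mul, show d.eval z = 0 from hz, zero_mul]
    have hz2 : p.eval (z - 2*(k:ℂ)) = 0 := by
      rw [hq, Polynomial.eval_comp, Polynomial.eval_sub, Polynomial.eval_X,
        Polynomial.eval_C] at hzq
      exact hzq
    have hmem1 : z ∈ Z := Multiset.mem_toFinset.mpr ((Polynomial.mem_roots hp0).mpr hzp)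
    have hmem2 : z - 2*(k:ℂ) ∈ Z :=
      Multiset.mem_toFinset.mpr ((Polynomial.mem_roots hp0).mpr hz2)
    apply hk
    rw [hdiffs]
    apply Finset.mem_image.mpr
    exact ⟨(z, z - 2*(k:ℂ)), Finset.mem_product.mpr ⟨hmem1, hmem2⟩, by ring⟩
  obtain ⟨u, v, huv⟩ := hcop
  have h1 : (1 : R2) ∈ W := by
    have h1' : embT u * embT p + embT v * embT q ∈ W :=
      W.add_mem (hmul (embT u) _ hpW) (hmul (embT v) _ hqW)
    have he : embT u * embT p + embT v * embT q = 1 := by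
      rw [show embT u * embT p + embT v * embT q = embT (u*p+v*q) by
        simp [embT, map_add, map_mul]]
      rw [huv]
      simp [embT]
    rwa [he] at h1'
  have htop : W = ⊤ := by
    rw [eq_top_iff]
    intro g _
    have := hmul g 1 h1
    rwa [mul_one] at this
  exact ⟨⟨p, hp0, hpW⟩, ⟨p, q, ⟨u, v, huv⟩, hpW, hqW⟩, h1, htop⟩
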